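/- Let θ, ω : ℕ⁺ → ℝ be sequences satisfying: (i) ω(l) + l → +∞ as l → ∞; (ii) Σ_{l≥1} 2^{-ω(l) - θ(l)} < ∞; (iii) there exists a constant C ∈ ℝ with θ(l) ≥ C for all l. Define F_{θ,ω} : ℝ → ℝ by F_{θ,ω}(x) = (1/l²)·2^{-θ(l)} if x ∈ [2^{-l}, 2^{-l} + 2^{-ω(l)}] for some integer l ≥ 1, and F_{θ,ω}(x) = 0 otherwise. Then the Hölder exponent of F_{θ,ω} at 0 equals liminf_{l→∞} θ(l)/l. -/

import Mathlib

open MeasureTheory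

/-- `X ∈ C^α(x0)`. -/
def HolderAt (X : ℝ → ℝ) (x0 α : ℝ) : Prop :=
  ∃ C : ℝ, 0 < C ∧ ∃ P : Polynomial ℝ,
    (P = 0 ∨ (P.natDegree : ℝ) < α) ∧
    ∃ δ : ℝ, 0 < δ ∧ ∀ x : ℝ, |x - x0| < δ → |X x - P.eval x| ≤ C * |x - x0| ^ α

/-- The Hölder exponent of `X` at `x0`: `h(x0) = sup {α ≥ 0 : X ∈ C^α(x0)}`. -/
noncomputable def holderExponent (X : ℝ → ℝ) (x0 : ℝ) : EReal :=
  sSup (Real.toEReal '' {α : ℝ | 0 ≤ α ∧ HolderAt X x0 α})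

/-- The function `F_{θ,ω}`: equal to `(1/l²) 2^{-θ(l)}` on `[2^{-l}, 2^{-l} + 2^{-ω(l)}]`
for integers `l ≥ 1`, and `0` elsewhere. -/
noncomputable def Fcomb (θ ω : ℕ → ℝ) (x : ℝ) : ℝ :=
  ∑' l : ℕ,
    if 1 ≤ l ∧ (2 : ℝ) ^ (-(l : ℝ)) ≤ x ∧ x ≤ (2 : ℝ) ^ (-(l : ℝ)) + (2 : ℝ) ^ (-ω l)
    then (1 / (l : ℝ) ^ 2) * (2 : ℝ) ^ (-θ l) else 0

open Filter Topology Polynomial Real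

/-!
Write `F = Fcomb θ ω`; it vanishes on `(-∞, 0]`, so the polynomial in a Hölder bound at `0` has
to vanish and `F ∈ C^α(0)` just means `F(x) ≤ K |x|^α` near `0`.

Upper bound: at `x = 2^{-l}` the `l`-th bump alone gives `F(x) ≥ l^{-2} 2^{-θ(l)}`, so
`2^{-θ(l)} ≤ K l² 2^{-α l}` and `θ(l)/l ≥ α - ε` eventually.

Lower bound: if `θ(l) ≥ β l + c` for `l ≥ L`, then for `0 < x < 2^{-L}` only bumps with
`2^{-l} ≤ x` contribute, each at most `l^{-2} 2^{-c} x^β`, and `∑ l^{-2} = π²/6`.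
Taking `β = 0` and `c` a lower bound of `θ` shows `0` is an admissible exponent.
-/

theorem ContinuousAt.eq_zero_of_eventually_abs_le_rpow {f : ℝ → ℝ} {l : Filter ℝ} [l.NeBot]
    (hl : l ≤ 𝓝 0) (hf : ContinuousAt f 0) {K α : ℝ} (hα : 0 < α)
    (h : ∀ᶠ x in l, |f x| ≤ K * |x| ^ α) : f 0 = 0 := by
  have hbound : Tendsto (fun x => K * |x| ^ α) l (𝓝 0) := by
    have := ((continuous_abs.rpow_const fun _ => Or.inr hα.le).const_mul K).tendsto 0
    simpa [zero_rpow hα.ne'] using this.mono_left hl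
  exact abs_nonpos_iff.1 (le_of_tendsto_of_tendsto (hf.abs.tendsto.mono_left hl) hbound h)

theorem Polynomial.eq_zero_of_eventually_abs_eval_le_rpow {P : ℝ[X]} {l : Filter ℝ} [l.NeBot]
    (hl : l ≤ 𝓝[≠] 0) {K α : ℝ} (hdeg : (P.natDegree : ℝ) < α)
    (h : ∀ᶠ x in l, |P.eval x| ≤ K * |x| ^ α) : P = 0 := by
  classical
  -- `P = x^m Q` with `Q(0) ≠ 0` and `m ≤ deg P < α`,
  -- so `|Q x| ≤ K |x|^(α - m) → 0` would force `Q(0) = 0`.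
  by_contra hP
  set m := rootMultiplicity 0 P
  set Q := P /ₘ (X - C 0) ^ m
  have hfactor : ∀ x, P.eval x = x ^ m * Q.eval x := fun x => by
    conv_lhs => rw [← pow_mul_divByMonic_rootMultiplicity_eq P 0]
    simp [Q, m]
  have hm : (m : ℝ) ≤ P.natDegree := by
    exact_mod_cast (count_roots (a := (0 : ℝ)) P ▸ Multiset.count_le_card _ _).trans (card_roots' P)
  refine eval_divByMonic_pow_rootMultiplicity_ne_zero 0 hP
    (Q.continuousAt.eq_zero_of_eventually_abs_le_rpow (hl.trans nhdsWithin_le_nhds)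
      (K := K) (α := α - m) (by linarith) ?_)
  filter_upwards [h, hl self_mem_nhdsWithin] with x hx hx0
  have hx0 : 0 < |x| := abs_pos.2 hx0
  have hsplit : |x| ^ α = |x| ^ m * |x| ^ (α - m) := by
    rw [← rpow_natCast, ← rpow_add hx0, add_sub_cancel]
  rw [hfactor, abs_mul, abs_pow, hsplit, mul_left_comm] at hx
  exact le_of_mul_le_mul_left hx (pow_pos hx0 m)

theorem holderAt_of_eventually_abs_le {X : ℝ → ℝ} {x₀ K α : ℝ} (hK : 0 < K)
    (h : ∀ᶠ x in 𝓝 x₀, |X x| ≤ K * |x - x₀| ^ α) : HolderAt X x₀ α := by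
  obtain ⟨δ, hδ, hball⟩ := Metric.eventually_nhds_iff.1 h
  exact ⟨K, hK, 0, Or.inl rfl, δ, hδ, fun x hx => by simpa using hball (by rwa [Real.dist_eq])⟩

theorem HolderAt.exists_eventually_abs_le {X : ℝ → ℝ} {α : ℝ} (h : HolderAt X 0 α)
    (hX : ∀ᶠ x in 𝓝[<] 0, X x = 0) : ∃ K, ∀ᶠ x in 𝓝 0, |X x| ≤ K * |x| ^ α := by
  obtain ⟨K, -, P, hP, δ, hδ, hbound⟩ := h
  have hball : ∀ᶠ x in 𝓝 0, |X x - P.eval x| ≤ K * |x| ^ α := by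
    filter_upwards [Metric.ball_mem_nhds 0 hδ] with x hx
    simpa using hbound x (by simpa using hx)
  obtain rfl : P = 0 := hP.elim id fun hdeg =>
    P.eq_zero_of_eventually_abs_eval_le_rpow (nhdsLT_le_nhdsNE 0) hdeg <| by
      filter_upwards [hX, nhdsWithin_le_nhds hball] with x hx0 hx
      simpa [hx0] using hx
  exact ⟨K, by simpa using hball⟩

theorem coe_le_liminf_of_forall_sub_le {ι : Type*} {f : Filter ι} {u : ι → ℝ} {a : ℝ}
    (h : ∀ ε > 0, ∀ᶠ n in f, a - ε ≤ u n) : (a : EReal) ≤ liminf (fun n => (u n : EReal)) f := by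
  refine le_of_forall_lt_imp_le_of_dense fun b hb => ?_
  induction b using EReal.rec with
  | bot => exact bot_le
  | coe r =>
    refine le_liminf_of_le (h := ?_)
    filter_upwards [h (a - r) (by simpa [sub_pos] using hb)] with n hn
    exact EReal.coe_le_coe_iff.2 (by linarith)
  | top => exact absurd hb not_top_lt

theorem coe_le_liminf_div_of_two_rpow_neg_le {u : ℕ → ℝ} {a K : ℝ} {k : ℕ}
    (h : ∀ᶠ n in atTop, (2 : ℝ) ^ (-u n) ≤ K * n ^ k * 2 ^ (-(a * n))) :
    (a : EReal) ≤ liminf (fun n => ((u n / n : ℝ) : EReal)) atTop := by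
  refine coe_le_liminf_of_forall_sub_le fun ε hε => ?_
  have hpoly : ∀ᶠ n : ℕ in atTop, K * n ^ k ≤ 2 ^ (ε * n) := by
    filter_upwards [((isLittleO_pow_const_const_pow_of_one_lt k
      (one_lt_rpow one_lt_two hε)).const_mul_left K).bound one_pos] with n hn
    rw [rpow_mul_natCast zero_le_two]
    simpa [abs_of_pos (rpow_pos_of_pos two_pos ε)] using (le_abs_self _).trans hn
  filter_upwards [h, hpoly, eventually_gt_atTop 0] with n hn hKn hn0
  have : (2 : ℝ) ^ (-u n) ≤ 2 ^ (-((a - ε) * n)) := calc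
    _ ≤ K * n ^ k * 2 ^ (-(a * n)) := hn
    _ ≤ 2 ^ (ε * n) * 2 ^ (-(a * n)) := by gcongr
    _ = _ := by rw [← rpow_add two_pos]; ring_nf
  rw [le_div_iff₀ (by positivity)]
  linarith [(rpow_le_rpow_left_iff one_lt_two).1 this]

section Fcomb

variable {θ ω : ℕ → ℝ} {x c : ℝ}

noncomputable def FcombTerm (θ ω : ℕ → ℝ) (x : ℝ) (l : ℕ) : ℝ :=
  if 1 ≤ l ∧ (2 : ℝ) ^ (-(l : ℝ)) ≤ x ∧ x ≤ (2 : ℝ) ^ (-(l : ℝ)) + (2 : ℝ) ^ (-ω l)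
  then (1 / (l : ℝ) ^ 2) * (2 : ℝ) ^ (-θ l) else 0

theorem Fcomb_eq_tsum : Fcomb θ ω x = ∑' l, FcombTerm θ ω x l := rfl

theorem FcombTerm_nonneg (l : ℕ) : 0 ≤ FcombTerm θ ω x l := by
  unfold FcombTerm; split <;> positivity

theorem FcombTerm_le (l : ℕ) : FcombTerm θ ω x l ≤ 1 / (l : ℝ) ^ 2 * 2 ^ (-θ l) := by
  unfold FcombTerm; split
  · rfl
  · positivity

theorem FcombTerm_eq_zero_of_lt {l : ℕ} (hx : x < 2 ^ (-(l : ℝ))) : FcombTerm θ ω x l = 0 :=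
  if_neg fun h => hx.not_ge h.2.1

theorem FcombTerm_two_rpow_neg {l : ℕ} (hl : 1 ≤ l) :
    FcombTerm θ ω (2 ^ (-(l : ℝ))) l = 1 / (l : ℝ) ^ 2 * 2 ^ (-θ l) :=
  if_pos ⟨hl, le_rfl, le_add_of_nonneg_right (by positivity)⟩

theorem summable_FcombTerm (hθ : ∀ l, 1 ≤ l → c ≤ θ l) : Summable (FcombTerm θ ω x) := by
  refine .of_nonneg_of_le FcombTerm_nonneg (fun l => ?_)
    (hasSum_zeta_two.mul_right (2 ^ (-c))).summable
  refine (FcombTerm_le l).trans ?_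
  rcases Nat.eq_zero_or_pos l with rfl | hl
  · simp
  · gcongr
    · norm_num
    · exact hθ l hl

theorem Fcomb_nonneg : 0 ≤ Fcomb θ ω x :=
  tsum_nonneg fun _ => FcombTerm_nonneg _

theorem Fcomb_eq_zero_of_nonpos (hx : x ≤ 0) : Fcomb θ ω x = 0 := by
  rw [Fcomb_eq_tsum, tsum_congr fun l => FcombTerm_eq_zero_of_lt (hx.trans_lt (by positivity)),
    tsum_zero]

theorem le_Fcomb_two_rpow_neg (hθ : ∀ l, 1 ≤ l → c ≤ θ l) {l : ℕ} (hl : 1 ≤ l) :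
    1 / (l : ℝ) ^ 2 * 2 ^ (-θ l) ≤ Fcomb θ ω (2 ^ (-(l : ℝ))) := by
  rw [← FcombTerm_two_rpow_neg hl]
  exact (summable_FcombTerm hθ).le_tsum l fun i _ => FcombTerm_nonneg i

theorem Fcomb_le_rpow {β : ℝ} (hβ : 0 ≤ β) {L : ℕ} (hθ : ∀ l, L ≤ l → β * l + c ≤ θ l)
    (hx₀ : 0 < x) (hx : x < 2 ^ (-(L : ℝ))) :
    Fcomb θ ω x ≤ π ^ 2 / 6 * 2 ^ (-c) * x ^ β := by
  have hterm (l : ℕ) : FcombTerm θ ω x l ≤ 1 / (l : ℝ) ^ 2 * (2 ^ (-c) * x ^ β) := by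
    rcases lt_or_ge x (2 ^ (-(l : ℝ))) with hxl | hlx
    · rw [FcombTerm_eq_zero_of_lt hxl]; positivity
    have hLl : L ≤ l := by
      have := hlx.trans_lt hx
      rw [rpow_lt_rpow_left_iff one_lt_two, neg_lt_neg_iff, Nat.cast_lt] at this
      exact this.le
    refine (FcombTerm_le l).trans (mul_le_mul_of_nonneg_left ?_ (by positivity))
    calc (2 : ℝ) ^ (-θ l) ≤ 2 ^ (-c + -(l : ℝ) * β) := by
          gcongr
          · norm_num
          · linarith [hθ l hLl]
      _ = 2 ^ (-c) * (2 ^ (-(l : ℝ))) ^ β := by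
          rw [rpow_add two_pos, rpow_mul zero_le_two]
      _ ≤ 2 ^ (-c) * x ^ β := by gcongr
  have hsum := hasSum_zeta_two.mul_right (2 ^ (-c) * x ^ β)
  rw [mul_assoc]
  exact hasSum_le hterm
    ((Summable.of_nonneg_of_le FcombTerm_nonneg hterm hsum.summable).hasSum) hsum

theorem holderAt_Fcomb_of_eventually_le {β : ℝ} (hβ : 0 ≤ β) (hθ : ∀ᶠ l in atTop, β * l + c ≤ θ l) :
    HolderAt (Fcomb θ ω) 0 β := by
  obtain ⟨L, hL⟩ := eventually_atTop.1 hθ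
  refine holderAt_of_eventually_abs_le (K := π ^ 2 / 6 * 2 ^ (-c)) (by positivity) ?_
  filter_upwards [Iio_mem_nhds (by positivity : (0 : ℝ) < 2 ^ (-(L : ℝ)))] with x hx
  rw [sub_zero, abs_of_nonneg Fcomb_nonneg]
  rcases le_or_gt x 0 with hx₀ | hx₀
  · rw [Fcomb_eq_zero_of_nonpos hx₀]; positivity
  · rw [abs_of_pos hx₀]; exact Fcomb_le_rpow hβ hL hx₀ hx

theorem HolderAt.coe_le_liminf_Fcomb {α : ℝ} (hθ : ∀ l, 1 ≤ l → c ≤ θ l)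
    (h : HolderAt (Fcomb θ ω) 0 α) :
    (α : EReal) ≤ liminf (fun l => ((θ l / l : ℝ) : EReal)) atTop := by
  obtain ⟨K, hK⟩ := h.exists_eventually_abs_le <|
    eventually_nhdsWithin_of_forall fun x hx => Fcomb_eq_zero_of_nonpos (le_of_lt hx)
  have hdyadic : Tendsto (fun l : ℕ => (2 : ℝ) ^ (-(l : ℝ))) atTop (𝓝 0) :=
    (tendsto_rpow_atBot_of_base_gt_one 2 one_lt_two).comp
      (tendsto_neg_atTop_atBot.comp tendsto_natCast_atTop_atTop)
  refine coe_le_liminf_div_of_two_rpow_neg_le (K := K) (k := 2) ?_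
  filter_upwards [hdyadic.eventually hK, eventually_ge_atTop 1] with l hl hl1
  rw [abs_of_nonneg Fcomb_nonneg, abs_of_pos (by positivity), ← rpow_mul zero_le_two] at hl
  have := (le_Fcomb_two_rpow_neg hθ hl1).trans hl
  rw [div_mul_eq_mul_div, one_mul, div_le_iff₀ (by positivity)] at this
  calc _ ≤ K * 2 ^ (-(l : ℝ) * α) * l ^ 2 := this
    _ = _ := by ring_nf

end Fcomb

theorem stmt11_general (θ ω : ℕ → ℝ)
    (h3 : ∃ C : ℝ, ∀ l : ℕ, 1 ≤ l → C ≤ θ l) :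
    holderExponent (Fcomb θ ω) 0 =
      Filter.liminf (fun l : ℕ => ((θ l / (l : ℝ) : ℝ) : EReal)) Filter.atTop := by
  obtain ⟨c, hc⟩ := h3
  refine le_antisymm (sSup_le ?_) (le_of_forall_lt_imp_le_of_dense fun a ha => ?_)
  · rintro _ ⟨α, ⟨-, hα⟩, rfl⟩
    exact hα.coe_le_liminf_Fcomb hc
  have hbounded : HolderAt (Fcomb θ ω) 0 0 :=
    holderAt_Fcomb_of_eventually_le le_rfl <|
      eventually_atTop.2 ⟨1, fun l hl => by simpa using hc l hl⟩
  induction a using EReal.rec with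
  | bot => exact bot_le
  | coe r =>
    rcases le_or_gt r 0 with hr | hr
    · exact (EReal.coe_le_coe_iff.2 hr).trans (le_sSup ⟨0, ⟨le_rfl, hbounded⟩, rfl⟩)
    · refine le_sSup ⟨r, ⟨hr.le, holderAt_Fcomb_of_eventually_le (c := 0) hr.le ?_⟩, rfl⟩
      filter_upwards [eventually_lt_of_lt_liminf ha, eventually_gt_atTop 0] with l hl hl0
      have := (lt_div_iff₀ (by positivity)).1 (EReal.coe_lt_coe_iff.1 hl)
      linarith
  | top => exact absurd ha not_top_lt

/-- if `ω(l) + l → ∞`, `Σ 2^{-ω(l)-θ(l)} < ∞` and `θ` is bounded below,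
then the Hölder exponent of `F_{θ,ω}` at `0` is `liminf θ(l)/l`. -/
theorem stmt11 (θ ω : ℕ → ℝ)
    (h1 : Filter.Tendsto (fun l : ℕ => ω l + (l : ℝ)) Filter.atTop Filter.atTop)
    (h2 : Summable (fun l : ℕ => (2 : ℝ) ^ (-(ω l) - θ l)))
    (h3 : ∃ C : ℝ, ∀ l : ℕ, 1 ≤ l → C ≤ θ l) :
    holderExponent (Fcomb θ ω) 0 =
      Filter.liminf (fun l : ℕ => ((θ l / (l : ℝ) : ℝ) : EReal)) Filter.atTop :=
  stmt11_general θ ω h3
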